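/- In the automaton group of automaton 2427, a((101)^∞) = 01(101)^∞, b((101)^∞) = 00(101)^∞, and c((101)^∞) = 11(101)^∞; consequently c^n((101)^∞) ∼ (101)^∞ for all n ≥ 1, while c^{-2}((101)^∞) = (100)^∞, so c has infinite order. -/

import Mathlib

namespace Stmt18


/-- A Mealy automaton over the binary alphabet with state set `S`. -/
structure Mealy (S : Type) where
  /-- transition function -/
  δ : S → Bool → S
  /-- output function -/
  τ : S → Bool → Bool

namespace Mealy

variable {S : Type} (M : Mealy S)

/-- The state reached from `q` after reading the first `n` letters of `w`. -/
def stateAt (q : S) (w : ℕ → Bool) : ℕ → S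
  | 0 => q
  | n + 1 => M.δ (stateAt q w n) (w n)

/-- The action of state `q` on infinite words. -/
def act (q : S) (w : ℕ → Bool) : ℕ → Bool :=
  fun n => M.τ (M.stateAt q w n) (w n)

/-- The inverse automaton (for automata whose output functions are involutions). -/
def inv : Mealy S := ⟨fun q b => M.δ q (M.τ q b), M.τ⟩

theorem stateAt_inv_act (h : ∀ q b, M.τ q (M.τ q b) = b) (q : S) (w : ℕ → Bool) :
    ∀ n, M.inv.stateAt q (M.act q w) n = M.stateAt q w n := by
  intro n
  induction n with
  | zero => rfl
  | succ n ih =>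
    show M.inv.δ (M.inv.stateAt q (M.act q w) n) (M.act q w n) = M.δ (M.stateAt q w n) (w n)
    rw [ih]
    show M.δ (M.stateAt q w n) (M.τ (M.stateAt q w n) (M.τ (M.stateAt q w n) (w n))) = _
    rw [h]

theorem inv_act (h : ∀ q b, M.τ q (M.τ q b) = b) (q : S) (w : ℕ → Bool) :
    M.inv.act q (M.act q w) = w := by
  funext n
  show M.inv.τ (M.inv.stateAt q (M.act q w) n) (M.act q w n) = w n
  rw [stateAt_inv_act M h]
  show M.τ (M.stateAt q w n) (M.τ (M.stateAt q w n) (w n)) = w n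
  rw [h]

theorem inv_inv (h : ∀ q b, M.τ q (M.τ q b) = b) : M.inv.inv = M := by
  obtain ⟨d, t⟩ := M
  simp only [inv]
  congr 1
  funext q b
  exact congrArg (d q) (h q b)

/-- The permutation of the set of infinite binary words defined by state `q`. -/
def perm (h : ∀ q b, M.τ q (M.τ q b) = b) (q : S) : Equiv.Perm (ℕ → Bool) where
  toFun := M.act q
  invFun := M.inv.act q
  left_inv := fun w => M.inv_act h q w
  right_inv := fun w => by
    have h2 : ∀ q b, M.inv.τ q (M.inv.τ q b) = b := h
    have := M.inv.inv_act h2 q w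
    rwa [M.inv_inv h] at this

end Mealy

/-- Prepend a finite word to an infinite word. -/
def cat (u : List Bool) (w : ℕ → Bool) : ℕ → Bool :=
  fun n => u.getD n (w (n - u.length))

/-- The (semantic) restriction of a transformation of infinite words to the
subtree indexed by the finite word `u`. -/
def resW (f : (ℕ → Bool) → ℕ → Bool) (u : List Bool) : (ℕ → Bool) → ℕ → Bool :=
  fun w n => f (cat u w) (n + u.length)

/-- The periodic infinite word with period `u`. -/
def per (u : List Bool) : ℕ → Bool := fun n => u.getD (n % u.length) false

/-- Left-shift equivalence of infinite words: they share a common infinite tail. -/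
def seq (u v : ℕ → Bool) : Prop := ∃ k l : ℕ, ∀ n, u (n + k) = v (n + l)

inductive St : Type
  | a | b | c
deriving DecidableEq

instance : Fintype St := ⟨{.a, .b, .c}, fun x => by cases x <;> decide⟩

/-- Automaton 2427. -/
def M : Mealy St where
  δ := fun q x => match q, x with
    | .a, false => .c | .a, true => .b
    | .b, false => .c | .b, true => .c
    | .c, false => .c | .c, true => .a
  τ := fun q x => match q with
    | .a => !x
    | .b => !x
    | .c => x

theorem M_inv : ∀ q x, M.τ q (M.τ q x) = x := by decide

/-- The automorphism of the binary tree boundary defined by state `a`. -/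
def a : Equiv.Perm (ℕ → Bool) := M.perm M_inv .a

/-- The automorphism of the binary tree boundary defined by state `b`. -/
def b : Equiv.Perm (ℕ → Bool) := M.perm M_inv .b

/-- The automorphism of the binary tree boundary defined by state `c`. -/
def c : Equiv.Perm (ℕ → Bool) := M.perm M_inv .c

/-!
Each of `a`, `b`, `c` maps `(101)^∞` to a finite word followed by `(101)^∞`, so the words of
this shape form a set invariant under `c`. If `c ^ n = 1` with `n ≥ 1`, then `c⁻¹ = c ^ (n - 1)`
preserves this set as well; but `c⁻²((101)^∞) = (100)^∞` contains the factor `00`, which no word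
`u (101)^∞` has beyond its prefix `u`.
-/

@[simp]
theorem cat_nil (w : ℕ → Bool) : cat [] w = w := by
  funext n
  simp [cat]

theorem cat_cons_succ (x : Bool) (u : List Bool) (w : ℕ → Bool) (n : ℕ) :
    cat (x :: u) w (n + 1) = cat u w n := by
  simp [cat]

theorem cat_apply_add_length (u : List Bool) (w : ℕ → Bool) (n : ℕ) :
    cat u w (n + u.length) = w n := by
  simp [cat]

theorem cat_cat (u v : List Bool) (w : ℕ → Bool) : cat u (cat v w) = cat (u ++ v) w := by
  induction u with
  | nil => simp
  | cons x u ih =>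
    funext n
    cases n with
    | zero => rfl
    | succ n => rw [List.cons_append, cat_cons_succ, cat_cons_succ, ih]

theorem seq_cat_left (u : List Bool) (w : ℕ → Bool) : seq (cat u w) w :=
  ⟨u.length, 0, cat_apply_add_length u w⟩

theorem per_add_mul_length (u : List Bool) (n k : ℕ) : per u (n + k * u.length) = per u n := by
  simp [per]

theorem cat_per_self (u : List Bool) : cat u (per u) = per u := by
  funext n
  rcases lt_or_ge n u.length with hn | hn
  · simp [cat, per, hn, Nat.mod_eq_of_lt]
  · obtain ⟨m, rfl⟩ := Nat.exists_eq_add_of_le' hn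
    rw [cat_apply_add_length]
    simpa using (per_add_mul_length u m 1).symm

theorem eq_per_of_cat_eq {u : List Bool} (hu : u ≠ []) {w : ℕ → Bool} (h : cat u w = w) :
    w = per u := by
  have hlen : 0 < u.length := List.length_pos_iff.mpr hu
  funext n
  induction n using Nat.strong_induction_on with
  | _ n ih =>
    rcases lt_or_ge n u.length with hn | hn
    · rw [← h, ← cat_per_self u]
      simp [cat, hn]
    · obtain ⟨m, rfl⟩ := Nat.exists_eq_add_of_le' hn
      rw [← h, cat_apply_add_length, ih m (by omega), ← one_mul u.length, per_add_mul_length]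

theorem cat_per_append {u v : List Bool} (h : u ++ v ≠ []) :
    cat u (per (v ++ u)) = per (u ++ v) := by
  refine eq_per_of_cat_eq h ?_
  rw [← cat_cat, cat_cat v, cat_per_self]

namespace Mealy

variable {S : Type} (M : Mealy S)

def finalState : S → List Bool → S
  | q, [] => q
  | q, x :: u => finalState (M.δ q x) u

def output : S → List Bool → List Bool
  | _, [] => []
  | q, x :: u => M.τ q x :: output (M.δ q x) u

theorem length_output (q : S) (u : List Bool) : (M.output q u).length = u.length := by
  induction u generalizing q with
  | nil => rfl
  | cons x u ih => simp [output, ih]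

theorem stateAt_succ (q : S) (w : ℕ → Bool) (n : ℕ) :
    M.stateAt q w (n + 1) = M.stateAt (M.δ q (w 0)) (fun k => w (k + 1)) n := by
  induction n with
  | zero => rfl
  | succ n ih => exact congrArg (M.δ · (w (n + 1))) ih

theorem act_succ (q : S) (w : ℕ → Bool) (n : ℕ) :
    M.act q w (n + 1) = M.act (M.δ q (w 0)) (fun k => w (k + 1)) n :=
  congrArg (M.τ · (w (n + 1))) (M.stateAt_succ q w n)

theorem act_cat (q : S) (u : List Bool) (w : ℕ → Bool) :
    M.act q (cat u w) = cat (M.output q u) (M.act (M.finalState q u) w) := by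
  induction u generalizing q with
  | nil => simp [output, finalState]
  | cons x u ih =>
    funext n
    cases n with
    | zero => rfl
    | succ n =>
      have hshift : (fun k => cat (x :: u) w (k + 1)) = cat u w := funext (cat_cons_succ x u w)
      rw [act_succ, hshift, output, cat_cons_succ]
      exact congrFun (ih _) n

theorem act_per_of_finalState_eq {q : S} {u : List Bool} (hu : u ≠ [])
    (hq : M.finalState q u = q) : M.act q (per u) = per (M.output q u) := by
  refine eq_per_of_cat_eq (by simpa [← List.length_pos_iff, length_output] using hu) ?_
  conv_rhs => rw [← cat_per_self u, act_cat, hq]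

theorem exists_act_cat_eq_cat {w : ℕ → Bool} (h : ∀ r, ∃ v, M.act r w = cat v w)
    (q : S) (u : List Bool) : ∃ v, M.act q (cat u w) = cat v w := by
  obtain ⟨v, hv⟩ := h (M.finalState q u)
  exact ⟨M.output q u ++ v, by rw [act_cat, hv, cat_cat]⟩

end Mealy

local notation "w₁₀₁" => per [true, false, true]
local notation "w₁₀₀" => per [true, false, false]
local notation "w₁₁₀" => per [true, true, false]

theorem a_apply_w₁₀₁ : a w₁₀₁ = cat [false, true] w₁₀₁ :=
  calc M.act .a w₁₀₁ = per [false, true, true] := M.act_per_of_finalState_eq (by simp) rfl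
    _ = cat [false, true] w₁₀₁ :=
      (cat_per_append (u := [false, true]) (v := [true]) (by simp)).symm

theorem b_apply_w₁₀₁ : b w₁₀₁ = cat [false, false] w₁₀₁ :=
  calc M.act .b w₁₀₁ = M.act .b (cat [true, false, true] w₁₀₁) := by rw [cat_per_self]
    _ = cat [false, false, true] (a w₁₀₁) := M.act_cat _ _ _
    _ = cat [false, false] (cat [true, false, true] w₁₀₁) := by
      rw [a_apply_w₁₀₁, cat_cat, cat_cat]; rfl
    _ = cat [false, false] w₁₀₁ := by rw [cat_per_self]

theorem c_apply_w₁₀₁ : c w₁₀₁ = cat [true, true] w₁₀₁ :=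
  calc M.act .c w₁₀₁ = M.act .c (cat [true, false, true] w₁₀₁) := by rw [cat_per_self]
    _ = cat [true, true, true] (a w₁₀₁) := M.act_cat _ _ _
    _ = cat [true, true] (cat [true, false, true] w₁₀₁) := by
      rw [a_apply_w₁₀₁, cat_cat, cat_cat]; rfl
    _ = cat [true, true] w₁₀₁ := by rw [cat_per_self]

theorem c_apply_w₁₀₀ : c w₁₀₀ = w₁₁₀ := M.act_per_of_finalState_eq (by simp) rfl

theorem c_apply_w₁₁₀ : c w₁₁₀ = w₁₀₁ := M.act_per_of_finalState_eq (by simp) rfl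

theorem exists_pow_c_apply_w₁₀₁ (n : ℕ) : ∃ u, (c ^ n) w₁₀₁ = cat u w₁₀₁ := by
  induction n with
  | zero => exact ⟨[], by simp⟩
  | succ n ih =>
    obtain ⟨u, hu⟩ := ih
    rw [pow_succ', Equiv.Perm.mul_apply, hu]
    refine M.exists_act_cat_eq_cat (fun r => ?_) .c u
    cases r
    exacts [⟨_, a_apply_w₁₀₁⟩, ⟨_, b_apply_w₁₀₁⟩, ⟨_, c_apply_w₁₀₁⟩]

theorem c_inv_mul_c_inv_apply_w₁₀₁ : (c⁻¹ * c⁻¹) w₁₀₁ = w₁₀₀ := by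
  rw [Equiv.Perm.mul_apply, Equiv.Perm.inv_eq_iff_eq.mpr c_apply_w₁₁₀.symm,
    Equiv.Perm.inv_eq_iff_eq.mpr c_apply_w₁₀₀.symm]

theorem w₁₀₁_succ_of_eq_false {n : ℕ} (h : w₁₀₁ n = false) : w₁₀₁ (n + 1) = true := by
  simp only [per, List.length_cons, List.length_nil] at h ⊢
  have : n % 3 < 3 := Nat.mod_lt n (by norm_num)
  interval_cases hn : n % 3 <;> simp_all [Nat.add_mod]

theorem cat_w₁₀₁_ne_w₁₀₀ (u : List Bool) : cat u w₁₀₁ ≠ w₁₀₀ := by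
  intro h
  set L := u.length
  have h₁ : w₁₀₁ (2 * L + 1) = false := by
    rw [← cat_apply_add_length u w₁₀₁, h, show 2 * L + 1 + L = 1 + L * 3 by ring]
    exact (per_add_mul_length _ 1 L).trans rfl
  have h₂ : w₁₀₁ (2 * L + 1 + 1) = false := by
    rw [← cat_apply_add_length u w₁₀₁, h, show 2 * L + 1 + 1 + L = 2 + L * 3 by ring]
    exact (per_add_mul_length _ 2 L).trans rfl
  simp [w₁₀₁_succ_of_eq_false h₁] at h₂

/-- In the automaton group of automaton 2427: `a((101)^∞) = 01(101)^∞`,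
`b((101)^∞) = 00(101)^∞` and `c((101)^∞) = 11(101)^∞`; consequently
`cⁿ((101)^∞) ∼ (101)^∞` for all `n ≥ 1`, while `c⁻²((101)^∞) = (100)^∞`,
so `c` has infinite order. -/
theorem automaton2427_c_infinite_order :
    (a (per [true, false, true]) = cat [false, true] (per [true, false, true])) ∧
    (b (per [true, false, true]) = cat [false, false] (per [true, false, true])) ∧
    (c (per [true, false, true]) = cat [true, true] (per [true, false, true])) ∧
    (∀ n : ℕ, 1 ≤ n → seq (⇑(c ^ n) (per [true, false, true])) (per [true, false, true])) ∧
    (⇑(c⁻¹ * c⁻¹) (per [true, false, true]) = per [true, false, false]) ∧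
    (∀ n : ℕ, 1 ≤ n → c ^ n ≠ 1) := by
  refine ⟨a_apply_w₁₀₁, b_apply_w₁₀₁, c_apply_w₁₀₁, fun n _ => ?_, c_inv_mul_c_inv_apply_w₁₀₁,
    fun n hn hcn => ?_⟩
  · obtain ⟨u, hu⟩ := exists_pow_c_apply_w₁₀₁ n
    exact hu ▸ seq_cat_left u _
  · have hinv : c ^ (n - 1) = c⁻¹ :=
      eq_inv_of_mul_eq_one_left (by rwa [← pow_succ, Nat.sub_add_cancel hn])
    obtain ⟨u, hu⟩ := exists_pow_c_apply_w₁₀₁ (n - 1 + (n - 1))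
    rw [pow_add, hinv, c_inv_mul_c_inv_apply_w₁₀₁] at hu
    exact cat_w₁₀₁_ne_w₁₀₀ u hu.symm

end Stmt18
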